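/- arXiv:2308.06690 — 3 statements merged into one kernel-verified Lean document; each statement's English description precedes it below -/
import Mathlib

section
/- Let a, b be complex sequences of length L and x, y complex sequences of length N. Define four L×N complex arrays by X₁[i,j] = a_i·x_j, X₂[i,j] = b_i·y_j, X₃[i,j] = −a_i·conj(y_{N-1-j}), and X₄[i,j] = b_i·conj(x_{N-1-j}). Then for all integer shifts τ₁, τ₂ with |τ₁| < L and |τ₂| < N, the sum of the 2D aperiodic autocorrelations factors as ρ_{X₁}(τ₁,τ₂) + ρ_{X₂}(τ₁,τ₂) + ρ_{X₃}(τ₁,τ₂) + ρ_{X₄}(τ₁,τ₂) = (ρ_a(τ₁) + ρ_b(τ₁)) · (ρ_x(τ₂) + ρ_y(τ₂)). -/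
open Finset

noncomputable section

/-- 1D aperiodic autocorrelation of a length-`N` complex sequence at integer shift `τ`:
`ρ_x(τ) = Σ x_j * conj (x_{j+τ})`, summed over all `j` with `j` and `j + τ` in `[0, N)`. -/
def acorr (N : ℕ) (x : ℕ → ℂ) (τ : ℤ) : ℂ :=
  ∑ j ∈ Finset.range N,
    if 0 ≤ (j : ℤ) + τ ∧ (j : ℤ) + τ < (N : ℤ) then
      x j * star (x ((j : ℤ) + τ).toNat)
    else 0

/-- 2D aperiodic autocorrelation of an `N₁ × N₂` complex array at integer shifts `(τ₁, τ₂)`. -/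
def acorr2 (N₁ N₂ : ℕ) (X : ℕ → ℕ → ℂ) (τ₁ τ₂ : ℤ) : ℂ :=
  ∑ i ∈ Finset.range N₁, ∑ j ∈ Finset.range N₂,
    if (0 ≤ (i : ℤ) + τ₁ ∧ (i : ℤ) + τ₁ < (N₁ : ℤ)) ∧
       (0 ≤ (j : ℤ) + τ₂ ∧ (j : ℤ) + τ₂ < (N₂ : ℤ)) then
      X i j * star (X ((i : ℤ) + τ₁).toNat ((j : ℤ) + τ₂).toNat)
    else 0

/-- Peak-to-mean envelope power ratio of a length-`L` complex sequence:
`sup_{t ∈ [0,1]} (1/L) * |Σ_{i<L} c_i exp(2π√-1 i t)|²`. -/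
def pmepr (L : ℕ) (c : ℕ → ℂ) : ℝ :=
  ⨆ t : Set.Icc (0 : ℝ) 1,
    (‖∑ i ∈ Finset.range L,
      c i * Complex.exp (2 * Real.pi * Complex.I * (i : ℂ) * ((t : ℝ) : ℂ))‖) ^ 2 / L

/-!
The autocorrelation of an outer product `u ⊗ v` is the product of the autocorrelations of
`u` and `v`, so each of the four arrays contributes `ρ_a ρ_x`, `ρ_b ρ_y`, `ρ_a ρ_y`, `ρ_b ρ_x`.
For the last two one uses that negating a sequence does not change its autocorrelation, and
neither does reversing and conjugating it (substitute `k = N - 1 - j - τ`).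
-/

theorem acorr2_mul (L N : ℕ) (u v : ℕ → ℂ) (τ₁ τ₂ : ℤ) :
    acorr2 L N (fun i j => u i * v j) τ₁ τ₂ = acorr L u τ₁ * acorr N v τ₂ := by
  rw [acorr2, acorr, acorr, sum_mul_sum]
  refine sum_congr rfl fun i _ => sum_congr rfl fun j _ => ?_
  split_ifs <;> simp_all [star_mul']
  ring

theorem acorr_neg (N : ℕ) (w : ℕ → ℂ) (τ : ℤ) :
    acorr N (fun j => -w j) τ = acorr N w τ := by
  simp only [acorr, star_neg, neg_mul_neg]

theorem acorr_star_reverse (N : ℕ) (y : ℕ → ℂ) (τ : ℤ) :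
    acorr N (fun j => star (y (N - 1 - j))) τ = acorr N y τ := by
  simp only [acorr, ← sum_filter]
  refine sum_nbij' (fun j => N - 1 - ((j : ℤ) + τ).toNat)
    (fun j => N - 1 - ((j : ℤ) + τ).toNat) ?_ ?_ ?_ ?_ ?_ <;>
    intro j hj <;> simp only [mem_filter, mem_range] at hj ⊢
  any_goals omega
  have hshift : (((N - 1 - ((j : ℤ) + τ).toNat : ℕ) : ℤ) + τ).toNat = N - 1 - j := by omega
  rw [hshift, star_star, mul_comm]

theorem stmt_2_general (L N : ℕ) (a b x y : ℕ → ℂ) (τ₁ τ₂ : ℤ) :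
    acorr2 L N (fun i j => a i * x j) τ₁ τ₂ +
      acorr2 L N (fun i j => b i * y j) τ₁ τ₂ +
      acorr2 L N (fun i j => -(a i * star (y (N - 1 - j)))) τ₁ τ₂ +
      acorr2 L N (fun i j => b i * star (x (N - 1 - j))) τ₁ τ₂ =
    (acorr L a τ₁ + acorr L b τ₁) * (acorr N x τ₂ + acorr N y τ₂) := by
  simp_rw [← mul_neg, acorr2_mul, acorr_neg, acorr_star_reverse]
  ring

/-- the sum of the four 2D autocorrelations factors as
`(ρ_a(τ₁) + ρ_b(τ₁)) * (ρ_x(τ₂) + ρ_y(τ₂))`. -/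
theorem stmt_2 (L N : ℕ) (a b x y : ℕ → ℂ) (τ₁ τ₂ : ℤ)
    (h₁ : |τ₁| < (L : ℤ)) (h₂ : |τ₂| < (N : ℤ)) :
    acorr2 L N (fun i j => a i * x j) τ₁ τ₂ +
      acorr2 L N (fun i j => b i * y j) τ₁ τ₂ +
      acorr2 L N (fun i j => -(a i * star (y (N - 1 - j)))) τ₁ τ₂ +
      acorr2 L N (fun i j => b i * star (x (N - 1 - j))) τ₁ τ₂ =
    (acorr L a τ₁ + acorr L b τ₁) * (acorr N x τ₂ + acorr N y τ₂) :=
  stmt_2_general L N a b x y τ₁ τ₂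

end
end

section
/- (Theorem 2) Let x, y be unimodular complex sequences of length N and a, b unimodular complex sequences of length L. Define four L×N complex arrays by X₁[i,j] = a_i·x_j, X₂[i,j] = b_i·y_j, X₃[i,j] = −a_i·conj(y_{N-1-j}), and X₄[i,j] = b_i·conj(x_{N-1-j}). Then for each m ∈ {1,2,3,4} and each column index j ∈ {0,…,N−1}, the j-th column sequence X_{m,j} = (X_m[0,j], X_m[1,j], …, X_m[L−1,j]) satisfies PMEPR(X_{m,j}) ≤ 2 + (2/L)·Σ_{τ=1}^{L-1} |ρ_a(τ) + ρ_b(τ)|. -/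
/-!
For `|z| = 1` put `A(z) = Σ aᵢ zⁱ`. Expanding `A(z) · conj A(z)` and grouping the products
`aᵢ conj aⱼ` by `τ = |i - j|` gives `|A(z)|² = L + 2 Re Σ_{τ ≥ 1} ρ_a(τ) conj(z^τ)`, and likewise for `b`.
Adding the two identities and bounding each real part by a modulus,
`|A(z)|² ≤ |A(z)|² + |B(z)|² ≤ 2L + 2 Σ_{τ ≥ 1} |ρ_a(τ) + ρ_b(τ)|`, i.e. `PMEPR(a) ≤ 2 + (2/L) Σ |ρ_a + ρ_b|`,
and symmetrically for `b`. Each column of `X₁, …, X₄` is `a` or `b` times a unimodular constant,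
which leaves the PMEPR unchanged.
-/

open Finset

noncomputable section

section Shifts

variable {M : Type*} [AddCommMonoid M]

theorem sum_lower_triangle_eq_sum_shifts (L : ℕ) (f : ℕ → ℕ → M) :
    ∑ i ∈ range L, ∑ j ∈ range i, f i j
      = ∑ τ ∈ Icc 1 (L - 1), ∑ j ∈ range (L - τ), f (j + τ) j := by
  rw [sum_sigma', sum_sigma']
  refine sum_nbij' (fun p => ⟨p.1 - p.2, p.2⟩) (fun p => ⟨p.2 + p.1, p.2⟩) ?_ ?_ ?_ ?_ ?_
  · rintro ⟨i, j⟩ h; simp only [mem_sigma, mem_range, mem_Icc] at h ⊢; omega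
  · rintro ⟨τ, j⟩ h; simp only [mem_sigma, mem_range, mem_Icc] at h ⊢; omega
  · rintro ⟨i, j⟩ h; simp only [mem_sigma, mem_range] at h
    exact Sigma.ext (by dsimp only; omega) HEq.rfl
  · rintro ⟨τ, j⟩ h; simp only [mem_sigma, mem_range, mem_Icc] at h
    exact Sigma.ext (by dsimp only; omega) HEq.rfl
  · rintro ⟨i, j⟩ h; simp only [mem_sigma, mem_range] at h
    dsimp only; congr 2; omega

theorem sum_range_sum_range_eq_diag_add_sum_shifts (L : ℕ) (f : ℕ → ℕ → M) :
    ∑ i ∈ range L, ∑ j ∈ range L, f i j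
      = ∑ i ∈ range L, f i i
        + ∑ τ ∈ Icc 1 (L - 1), ∑ j ∈ range (L - τ), (f (j + τ) j + f j (j + τ)) := by
  have hrow : ∀ i ∈ range L, ∑ j ∈ range L, f i j
      = ∑ j ∈ range i, f i j + f i i + ∑ j ∈ Ico (i + 1) L, f i j := fun i hi => by
    rw [← sum_range_succ, sum_range_add_sum_Ico _ (mem_range.1 hi)]
  have hupper : ∑ i ∈ range L, ∑ j ∈ Ico (i + 1) L, f i j
      = ∑ j ∈ range L, ∑ i ∈ range j, f i j :=
    sum_comm' fun i j => by simp only [mem_range, mem_Ico]; omega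
  rw [sum_congr rfl hrow, sum_add_distrib, sum_add_distrib, hupper,
    sum_lower_triangle_eq_sum_shifts, sum_lower_triangle_eq_sum_shifts L fun j i => f i j]
  simp only [sum_add_distrib]
  abel

end Shifts

theorem acorr_natCast (N : ℕ) (x : ℕ → ℂ) (τ : ℕ) :
    acorr N x τ = ∑ j ∈ range (N - τ), x j * star (x (j + τ)) := by
  have hrange : range (N - τ) = (range N).filter (fun j => j + τ < N) := by
    ext j; simp only [mem_range, mem_filter]; omega
  rw [acorr, hrange, sum_filter]
  refine sum_congr rfl fun j _ => ?_
  by_cases h : j + τ < N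
  · rw [if_pos (by omega), if_pos h, show ((j : ℤ) + τ).toNat = j + τ by omega]
  · rw [if_neg (by omega), if_neg h]

theorem mul_star_eq_one_of_norm_eq_one {z : ℂ} (hz : ‖z‖ = 1) : z * star z = 1 := by
  rw [Complex.star_def, Complex.mul_conj', hz, Complex.ofReal_one, one_pow]

theorem sq_norm_sum_mul_pow {L : ℕ} {a : ℕ → ℂ} (ha : ∀ i < L, ‖a i‖ = 1) {z : ℂ}
    (hz : ‖z‖ = 1) :
    ‖∑ i ∈ range L, a i * z ^ i‖ ^ 2
      = L + 2 * ∑ τ ∈ Icc 1 (L - 1), (acorr L a τ * star (z ^ τ)).re := by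
  have hzz : ∀ n : ℕ, z ^ n * star (z ^ n) = 1 := fun n =>
    mul_star_eq_one_of_norm_eq_one (by rw [norm_pow, hz, one_pow])
  have hdiag : ∀ i ∈ range L, a i * z ^ i * star (a i * z ^ i) = 1 := fun i hi => by
    rw [star_mul', mul_mul_mul_comm, mul_star_eq_one_of_norm_eq_one (ha i (mem_range.1 hi)),
      hzz, one_mul]
  have hshift : ∀ τ : ℕ, ∑ j ∈ range (L - τ),
      (a (j + τ) * z ^ (j + τ) * star (a j * z ^ j) + a j * z ^ j * star (a (j + τ) * z ^ (j + τ)))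
        = ((2 * (acorr L a τ * star (z ^ τ)).re : ℝ) : ℂ) := fun τ => by
    rw [← Complex.add_conj, ← Complex.star_def, acorr_natCast, sum_mul, star_sum,
      ← sum_add_distrib]
    refine sum_congr rfl fun j _ => ?_
    simp only [star_mul', star_star, pow_add]
    linear_combination (a j * star (a (j + τ)) * star (z ^ τ)
      + star (a j) * a (j + τ) * z ^ τ) * hzz j
  have hsq : ((‖∑ i ∈ range L, a i * z ^ i‖ ^ 2 : ℝ) : ℂ)
      = L + ∑ τ ∈ Icc 1 (L - 1), ((2 * (acorr L a τ * star (z ^ τ)).re : ℝ) : ℂ) := by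
    rw [Complex.ofReal_pow, ← Complex.mul_conj', ← Complex.star_def, star_sum, sum_mul_sum,
      sum_range_sum_range_eq_diag_add_sum_shifts, sum_congr rfl hdiag,
      sum_congr rfl fun τ _ => hshift τ, sum_const, card_range, nsmul_one]
  rw [mul_sum]
  exact_mod_cast hsq

theorem sq_norm_add_sq_norm_le {L : ℕ} {a b : ℕ → ℂ} (ha : ∀ i < L, ‖a i‖ = 1)
    (hb : ∀ i < L, ‖b i‖ = 1) {z : ℂ} (hz : ‖z‖ = 1) :
    ‖∑ i ∈ range L, a i * z ^ i‖ ^ 2 + ‖∑ i ∈ range L, b i * z ^ i‖ ^ 2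
      ≤ 2 * L + 2 * ∑ τ ∈ Icc 1 (L - 1), ‖acorr L a τ + acorr L b τ‖ := by
  have hterm : ∀ τ : ℕ, (acorr L a τ * star (z ^ τ)).re + (acorr L b τ * star (z ^ τ)).re
      ≤ ‖acorr L a τ + acorr L b τ‖ := fun τ =>
    calc _ = ((acorr L a τ + acorr L b τ) * star (z ^ τ)).re := by rw [add_mul, Complex.add_re]
      _ ≤ ‖(acorr L a τ + acorr L b τ) * star (z ^ τ)‖ := Complex.re_le_norm _
      _ = _ := by rw [norm_mul, norm_star, norm_pow, hz, one_pow, mul_one]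
  have hsum := sum_le_sum fun τ (_ : τ ∈ Icc 1 (L - 1)) => hterm τ
  rw [sum_add_distrib] at hsum
  rw [sq_norm_sum_mul_pow ha hz, sq_norm_sum_mul_pow hb hz]
  linarith

theorem pmepr_le_of_forall_norm_eq_one {L : ℕ} {c : ℕ → ℂ} {B : ℝ} (hB : 0 ≤ B)
    (h : ∀ z : ℂ, ‖z‖ = 1 → ‖∑ i ∈ range L, c i * z ^ i‖ ^ 2 ≤ B * L) :
    pmepr L c ≤ B := by
  have : Nonempty (Set.Icc (0 : ℝ) 1) := ⟨⟨0, by norm_num⟩⟩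
  refine ciSup_le fun t => div_le_of_le_mul₀ (Nat.cast_nonneg L) hB ?_
  have hpow : ∀ i : ℕ, Complex.exp (2 * Real.pi * Complex.I * i * ((t : ℝ) : ℂ))
      = Complex.exp ((2 * Real.pi * t : ℝ) * Complex.I) ^ i := fun i => by
    rw [← Complex.exp_nat_mul]; congr 1; push_cast; ring
  simp only [hpow]
  exact h _ (Complex.norm_exp_ofReal_mul_I _)

theorem pmepr_mul_const {L : ℕ} (c : ℕ → ℂ) {u : ℂ} (hu : ‖u‖ = 1) :
    pmepr L (fun i => c i * u) = pmepr L c := by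
  simp only [pmepr, mul_right_comm _ u, ← sum_mul, norm_mul, hu, mul_one]

theorem pmepr_le_two_add_sum_norm_acorr_add {L : ℕ} {a b : ℕ → ℂ} (ha : ∀ i < L, ‖a i‖ = 1)
    (hb : ∀ i < L, ‖b i‖ = 1) :
    pmepr L a ≤ 2 + (2 / L) * ∑ τ ∈ Icc 1 (L - 1), ‖acorr L a τ + acorr L b τ‖ := by
  refine pmepr_le_of_forall_norm_eq_one (by positivity) fun z hz => ?_
  rcases Nat.eq_zero_or_pos L with rfl | hL
  · simp
  have hrhs : (2 + 2 / L * ∑ τ ∈ Icc 1 (L - 1), ‖acorr L a τ + acorr L b τ‖) * L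
      = 2 * L + 2 * ∑ τ ∈ Icc 1 (L - 1), ‖acorr L a τ + acorr L b τ‖ := by
    field_simp
  rw [hrhs]
  linarith [sq_norm_add_sq_norm_le ha hb hz, sq_nonneg ‖∑ i ∈ range L, b i * z ^ i‖]

/-- Theorem 2: every column sequence of each of the four arrays
`X₁[i,j] = a_i x_j`, `X₂[i,j] = b_i y_j`, `X₃[i,j] = -a_i conj (y_{N-1-j})`,
`X₄[i,j] = b_i conj (x_{N-1-j})` has PMEPR at most
`2 + (2/L) Σ_{τ=1}^{L-1} |ρ_a(τ) + ρ_b(τ)|`. -/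
theorem stmt_8 (L N : ℕ) (x y a b : ℕ → ℂ)
    (hx : ∀ j < N, ‖x j‖ = 1) (hy : ∀ j < N, ‖y j‖ = 1)
    (ha : ∀ i < L, ‖a i‖ = 1) (hb : ∀ i < L, ‖b i‖ = 1) :
    ∀ j < N,
      pmepr L (fun i => a i * x j) ≤
        2 + (2 / L) * ∑ τ ∈ Finset.Icc 1 (L - 1),
          ‖acorr L a (τ : ℤ) + acorr L b (τ : ℤ)‖ ∧
      pmepr L (fun i => b i * y j) ≤
        2 + (2 / L) * ∑ τ ∈ Finset.Icc 1 (L - 1),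
          ‖acorr L a (τ : ℤ) + acorr L b (τ : ℤ)‖ ∧
      pmepr L (fun i => -(a i * star (y (N - 1 - j)))) ≤
        2 + (2 / L) * ∑ τ ∈ Finset.Icc 1 (L - 1),
          ‖acorr L a (τ : ℤ) + acorr L b (τ : ℤ)‖ ∧
      pmepr L (fun i => b i * star (x (N - 1 - j))) ≤
        2 + (2 / L) * ∑ τ ∈ Finset.Icc 1 (L - 1),
          ‖acorr L a (τ : ℤ) + acorr L b (τ : ℤ)‖ := by
  intro j hj
  have hrev : N - 1 - j < N := by omega
  have hbound_a := pmepr_le_two_add_sum_norm_acorr_add ha hb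
  have hbound_b : pmepr L b ≤ 2 + (2 / L) * ∑ τ ∈ Icc 1 (L - 1), ‖acorr L a τ + acorr L b τ‖ := by
    simpa only [add_comm (acorr L b _)] using pmepr_le_two_add_sum_norm_acorr_add hb ha
  refine ⟨?_, ?_, ?_, ?_⟩
  · rwa [pmepr_mul_const a (hx j hj)]
  · rwa [pmepr_mul_const b (hy j hj)]
  · simp_rw [← mul_neg]
    rwa [pmepr_mul_const a (by rw [norm_neg, norm_star, hy _ hrev])]
  · rwa [pmepr_mul_const b (by rw [norm_star, hx _ hrev])]

end
end

section
/- (Proposition 1) Let n ≥ 0 be an integer and L = 2^{n+1} + 2^n. Let a, b be unimodular complex sequences of length L whose aperiodic autocorrelation sum satisfies ρ_a(τ) + ρ_b(τ) = 0 for every τ with 1 ≤ τ ≤ L−1 and τ ≠ 2^{n+1}, and |ρ_a(2^{n+1}) + ρ_b(2^{n+1})| ≤ 2^{n+1}. Let x, y be unimodular complex sequences of length N, and define four L×N complex arrays by X₁[i,j] = a_i·x_j, X₂[i,j] = b_i·y_j, X₃[i,j] = −a_i·conj(y_{N-1-j}), and X₄[i,j] = b_i·conj(x_{N-1-j}). Then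 every column sequence of each X_m (m ∈ {1,2,3,4}) has PMEPR at most 10/3. -/
/-!
On the unit circle, `|A(z)|² + |B(z)|² = Σ_τ z^{-τ} (ρ_a(τ) + ρ_b(τ))` for the generating
polynomials `A`, `B` of `a`, `b`. The hypotheses leave only the shifts `0` and `±2^{n+1}`,
so `|A(z)|² + |B(z)|² ≤ 2L + 2·2^{n+1} = 10L/3`. Each column of each array is `a` or `b`
multiplied by a unimodular constant, which does not change the PMEPR.
-/

open Finset

noncomputable section

section

variable {L : ℕ}

lemma acorr_neg_s9 (c : ℕ → ℂ) (τ : ℤ) : acorr L c (-τ) = star (acorr L c τ) := by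
  unfold acorr
  simp only [star_sum, apply_ite star, star_mul, star_star, star_zero]
  rw [← sum_filter, ← sum_filter]
  refine sum_nbij' (fun j => ((j : ℤ) - τ).toNat) (fun j => ((j : ℤ) + τ).toNat)
    ?_ ?_ ?_ ?_ ?_ <;> intro j hj <;> simp only [mem_filter, mem_range] at hj ⊢
  all_goals try omega
  rw [show ((((j : ℤ) - τ).toNat : ℤ) + τ).toNat = j by omega,
    show ((j : ℤ) + -τ).toNat = ((j : ℤ) - τ).toNat by omega, mul_comm]

lemma acorr_zero_of_norm_eq_one {c : ℕ → ℂ} (hc : ∀ i < L, ‖c i‖ = 1) :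
    acorr L c 0 = L := by
  unfold acorr
  rw [show (L : ℂ) = ∑ _j ∈ range L, (1 : ℂ) by simp]
  refine sum_congr rfl fun j hj => ?_
  rw [mem_range] at hj
  rw [if_pos (by omega), show ((j : ℤ) + 0).toNat = j by omega, Complex.star_def,
    Complex.mul_conj', hc j hj]
  norm_num

lemma sum_range_sum_range_eq_sum_acorr (c : ℕ → ℂ) (g : ℤ → ℂ) :
    ∑ i ∈ range L, ∑ k ∈ range L, g ((k : ℤ) - i) * (c i * star (c k)) =
      ∑ τ ∈ Icc (-(L : ℤ) + 1) (L - 1), g τ * acorr L c τ := by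
  unfold acorr
  simp only [mul_sum, mul_ite, mul_zero]
  rw [← sum_product', ← sum_product', ← sum_filter]
  refine sum_nbij' (fun q => ((q.2 : ℤ) - q.1, q.1)) (fun p => (p.2, ((p.2 : ℤ) + p.1).toNat))
    ?_ ?_ ?_ ?_ ?_ <;> intro q hq <;>
    simp only [mem_filter, mem_product, mem_range, mem_Icc] at hq ⊢
  any_goals omega
  any_goals ext <;> dsimp <;> omega
  rw [show ((q.1 : ℤ) + ((q.2 : ℤ) - q.1)).toNat = q.2 by omega]

lemma sq_norm_sum_mul_pow_eq_sum_acorr (c : ℕ → ℂ) {z : ℂ} (hz : ‖z‖ = 1) :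
    ((‖∑ i ∈ range L, c i * z ^ i‖ ^ 2 : ℝ) : ℂ) =
      ∑ τ ∈ Icc (-(L : ℤ) + 1) (L - 1), z ^ (-τ) * acorr L c τ := by
  have hz0 : z ≠ 0 := norm_ne_zero_iff.mp (by rw [hz]; exact one_ne_zero)
  have hstar : ∀ k : ℕ, star (z ^ k) = z ^ (-(k : ℤ)) := fun k => by
    rw [star_pow, zpow_neg, zpow_natCast, ← inv_pow, Complex.star_def,
      Complex.inv_def, Complex.normSq_eq_norm_sq, hz]
    simp
  rw [Complex.ofReal_pow, ← Complex.mul_conj', ← Complex.star_def, star_sum, sum_mul_sum,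
    ← sum_range_sum_range_eq_sum_acorr c (fun τ => z ^ (-τ))]
  refine sum_congr rfl fun i _ => sum_congr rfl fun k _ => ?_
  rw [star_mul, hstar, neg_sub, sub_eq_add_neg, zpow_add₀ hz0, zpow_natCast]
  ring

lemma sq_norm_add_sq_norm_le_sum_norm_acorr (a b : ℕ → ℂ) {z : ℂ} (hz : ‖z‖ = 1) :
    ‖∑ i ∈ range L, a i * z ^ i‖ ^ 2 + ‖∑ i ∈ range L, b i * z ^ i‖ ^ 2 ≤
      ∑ τ ∈ Icc (-(L : ℤ) + 1) (L - 1), ‖acorr L a τ + acorr L b τ‖ := by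
  calc _ = ‖((‖∑ i ∈ range L, a i * z ^ i‖ ^ 2 + ‖∑ i ∈ range L, b i * z ^ i‖ ^ 2 : ℝ) : ℂ)‖ := by
        rw [Complex.norm_real, Real.norm_of_nonneg (by positivity)]
    _ = ‖∑ τ ∈ Icc (-(L : ℤ) + 1) (L - 1), z ^ (-τ) * (acorr L a τ + acorr L b τ)‖ := by
        simp only [Complex.ofReal_add, sq_norm_sum_mul_pow_eq_sum_acorr _ hz, mul_add,
          sum_add_distrib]
    _ ≤ _ := by
        refine (norm_sum_le _ _).trans_eq (sum_congr rfl fun τ _ => ?_)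
        rw [norm_mul, norm_zpow, hz, one_zpow, one_mul]

lemma sum_norm_acorr_add_eq_of_single_peak {a b : ℕ → ℂ}
    (ha : ∀ i < L, ‖a i‖ = 1) (hb : ∀ i < L, ‖b i‖ = 1) {τ₀ : ℤ} (h1 : 1 ≤ τ₀)
    (h2 : τ₀ ≤ L - 1)
    (hzero : ∀ τ : ℤ, 1 ≤ τ → τ ≤ L - 1 → τ ≠ τ₀ → acorr L a τ + acorr L b τ = 0) :
    ∑ τ ∈ Icc (-(L : ℤ) + 1) (L - 1), ‖acorr L a τ + acorr L b τ‖ =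
      2 * L + 2 * ‖acorr L a τ₀ + acorr L b τ₀‖ := by
  set ρ : ℤ → ℂ := fun τ => acorr L a τ + acorr L b τ with hρ
  have hρneg : ∀ τ, ρ (-τ) = star (ρ τ) := fun τ => by simp only [hρ, acorr_neg_s9, star_add]
  have hsupp : ∀ τ ∈ Icc (-(L : ℤ) + 1) (L - 1), τ ∉ ({0, τ₀, -τ₀} : Finset ℤ) →
      ‖ρ τ‖ = 0 := by
    intro τ hτ hτ'
    simp only [mem_Icc, mem_insert, mem_singleton, not_or] at hτ hτ'
    rcases lt_or_gt_of_ne hτ'.1 with hneg | hpos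
    · rw [← neg_neg τ, hρneg, show ρ (-τ) = 0 from hzero (-τ) (by omega) (by omega) (by omega),
        star_zero, norm_zero]
    · rw [show ρ τ = 0 from hzero τ (by omega) hτ.2 hτ'.2.1, norm_zero]
  rw [← sum_subset (by intro τ; simp only [mem_insert, mem_singleton, mem_Icc]; omega) hsupp,
    sum_insert (by simp only [mem_insert, mem_singleton]; omega),
    sum_pair (by omega), hρneg, Complex.star_def, Complex.norm_conj]
  simp only [hρ, acorr_zero_of_norm_eq_one ha, acorr_zero_of_norm_eq_one hb]
  rw [← two_mul, norm_mul, Complex.norm_two, Complex.norm_natCast]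
  ring

lemma pmepr_le_of_forall_sq_norm_le (hL : 0 < L) {c : ℕ → ℂ} {K : ℝ}
    (h : ∀ z : ℂ, ‖z‖ = 1 → ‖∑ i ∈ range L, c i * z ^ i‖ ^ 2 ≤ K * L) :
    pmepr L c ≤ K := by
  have : Nonempty (Set.Icc (0 : ℝ) 1) := ⟨⟨0, by norm_num⟩⟩
  refine ciSup_le fun t => (div_le_iff₀ (by exact_mod_cast hL)).mpr ?_
  set z := Complex.exp ((2 * Real.pi * t : ℝ) * Complex.I)
  have hexp : ∀ i : ℕ, Complex.exp (2 * Real.pi * Complex.I * i * (t : ℝ)) = z ^ i := fun i => by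
    rw [← Complex.exp_nat_mul]
    push_cast
    ring_nf
  simp only [hexp]
  exact h z (Complex.norm_exp_ofReal_mul_I _)

lemma pmepr_mul_of_norm_eq_one (c : ℕ → ℂ) {w : ℂ} (hw : ‖w‖ = 1) :
    pmepr L (fun i => c i * w) = pmepr L c := by
  unfold pmepr
  simp only [mul_right_comm _ w, ← sum_mul, norm_mul, hw, mul_one]

end

/-- Proposition 1: with `L = 2^{n+1} + 2^n` and a unimodular pair `(a, b)`
whose autocorrelation sum vanishes for `1 ≤ τ ≤ L-1`, `τ ≠ 2^{n+1}`, and is bounded in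
modulus by `2^{n+1}` at `τ = 2^{n+1}`, every column sequence of each of the four arrays
has PMEPR at most `10/3`. -/
theorem stmt_9 (n N : ℕ) (L : ℕ) (hL : L = 2 ^ (n + 1) + 2 ^ n)
    (a b x y : ℕ → ℂ)
    (ha : ∀ i < L, ‖a i‖ = 1) (hb : ∀ i < L, ‖b i‖ = 1)
    (hx : ∀ j < N, ‖x j‖ = 1) (hy : ∀ j < N, ‖y j‖ = 1)
    (hzero : ∀ τ : ℤ, 1 ≤ τ → τ ≤ (L : ℤ) - 1 → τ ≠ 2 ^ (n + 1) →
      acorr L a τ + acorr L b τ = 0)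
    (hpeak : ‖acorr L a (2 ^ (n + 1)) + acorr L b (2 ^ (n + 1))‖ ≤ 2 ^ (n + 1)) :
    ∀ j < N,
      pmepr L (fun i => a i * x j) ≤ 10 / 3 ∧
      pmepr L (fun i => b i * y j) ≤ 10 / 3 ∧
      pmepr L (fun i => -(a i * star (y (N - 1 - j)))) ≤ 10 / 3 ∧
      pmepr L (fun i => b i * star (x (N - 1 - j))) ≤ 10 / 3 := by
  intro j hj
  have hL0 : 0 < L := by rw [hL]; positivity
  have hpair : ∀ z : ℂ, ‖z‖ = 1 →
      ‖∑ i ∈ range L, a i * z ^ i‖ ^ 2 + ‖∑ i ∈ range L, b i * z ^ i‖ ^ 2 ≤ 10 / 3 * L := by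
    intro z hz
    have hpos : (0 : ℤ) < 2 ^ n := by positivity
    have hLz : (L : ℤ) = 2 ^ (n + 1) + 2 ^ n := by exact_mod_cast hL
    calc _ ≤ ∑ τ ∈ Icc (-(L : ℤ) + 1) (L - 1), ‖acorr L a τ + acorr L b τ‖ :=
          sq_norm_add_sq_norm_le_sum_norm_acorr a b hz
      _ = 2 * L + 2 * ‖acorr L a (2 ^ (n + 1)) + acorr L b (2 ^ (n + 1))‖ :=
          sum_norm_acorr_add_eq_of_single_peak ha hb (τ₀ := 2 ^ (n + 1)) (by omega) (by omega)
            hzero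
      _ ≤ 2 * L + 2 * 2 ^ (n + 1) := by gcongr
      _ = 10 / 3 * L := by rw [hL]; push_cast; ring
  have hpa : pmepr L a ≤ 10 / 3 := pmepr_le_of_forall_sq_norm_le hL0 fun z hz =>
    le_of_add_le_of_nonneg_left (hpair z hz) (by positivity)
  have hpb : pmepr L b ≤ 10 / 3 := pmepr_le_of_forall_sq_norm_le hL0 fun z hz =>
    le_of_add_le_of_nonneg_right (hpair z hz) (by positivity)
  have hy' : ‖-star (y (N - 1 - j))‖ = 1 := by
    rw [norm_neg, Complex.star_def, Complex.norm_conj, hy _ (by omega)]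
  have hx' : ‖star (x (N - 1 - j))‖ = 1 := by
    rw [Complex.star_def, Complex.norm_conj, hx _ (by omega)]
  simp only [← mul_neg, pmepr_mul_of_norm_eq_one _ (hx j hj), pmepr_mul_of_norm_eq_one _ (hy j hj),
    pmepr_mul_of_norm_eq_one _ hy', pmepr_mul_of_norm_eq_one _ hx']
  exact ⟨hpa, hpb, hpa, hpb⟩

end
end
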